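/- Let ε ∈ (0,1), σ₁, σ₂ > 0, let X₁ = (X_{1A}, X_{1B}) : ℝ² → ℝ² and X₂ : ℝ → ℝ be continuously differentiable, let Ω_ε = {(x,y) ∈ (0,1)² : |x − y| > ε}, and let x* ∈ Ω_ε. Let p₁ : ℝ² → ℝ be C² on a neighborhood of the closure of Ω_ε and p₂ : ℝ → ℝ be C² on a neighborhood of [0,1]. Define Y₁ = p₁X₁ − (σ₁²/2)∇p₁ with components (Y_A, Y_B) and Y₂ = X₂p₂ − (σ₂²/2)p₂′. Assume: p₁ = 0 on the guard G_ε = {(x,y) ∈ [0,1]² : |x − y| = ε}; Y_A(0,y) = Y_A(1,y) = 0 and Y_B(x,0) = Y_B(x,1) = 0 for all x,y ∈ [0,1]; p₂(1) = 0; and Y₂(0) = 0. Then for every f₁ : ℝ² → ℝ that is C² on a neighborhood of the closure of Ω_ε and every f₂ : ℝ → ℝ that is C² on a neighborhood of [0,1] satisfying the compatibility conditions f₁(x,y) = f₂((x+y)/2) for all (x,y) ∈ G_ε, f₂(1) = f₁(x*), and the reflecting conditions ∂ₓf₁(0,y) = ∂ₓf₁(1,y) = 0, ∂_y f₁(x,0)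 = ∂_y f₁(x,1) = 0 for all x,y ∈ [0,1], and f₂′(0) = 0, the following identity holds: ∫_{Ω_ε} p₁ ( X₁·∇f₁ + (σ₁²/2) Δf₁ ) dx dy + ∫₀¹ p₂ ( X₂ f₂′ + (σ₂²/2) f₂″ ) dx = − ∫_{Ω_ε} f₁ (∇·Y₁) dx dy − ∫₀¹ f₂ Y₂′ dx + ∫_{ε/2}^{1−ε/2} f₂(x_C) s₂(x_C) dx_C + f₁(x*) Y₂(1), where s₂(x_C) = (Y_B − Y_A)(x_C + ε/2, x_C − ε/2) + (Y_A − Y_B)(x_C − ε/2, x_C + ε/2). -/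

import Mathlib

open MeasureTheory

/-- Partial derivative in the first coordinate direction. -/
noncomputable def pdx (g : ℝ × ℝ → ℝ) (z : ℝ × ℝ) : ℝ := fderiv ℝ g z (1, 0)

/-- Partial derivative in the second coordinate direction. -/
noncomputable def pdy (g : ℝ × ℝ → ℝ) (z : ℝ × ℝ) : ℝ := fderiv ℝ g z (0, 1)

/-- Laplacian `Δg = ∂²g/∂x² + ∂²g/∂y²`. -/
noncomputable def lap (g : ℝ × ℝ → ℝ) (z : ℝ × ℝ) : ℝ :=
  pdx (pdx g) z + pdy (pdy g) z

/-- The mode-1 domain: the open unit square with the closed diagonal band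
`{|x − y| ≤ ε}` removed. -/
def OmegaEps (ε : ℝ) : Set (ℝ × ℝ) :=
  {z : ℝ × ℝ | 0 < z.1 ∧ z.1 < 1 ∧ 0 < z.2 ∧ z.2 < 1 ∧ ε < |z.1 - z.2|}

/-- The guard set `G_ε = {(x,y) ∈ [0,1]² : |x − y| = ε}` of mode 1. -/
def GuardEps (ε : ℝ) : Set (ℝ × ℝ) :=
  {z : ℝ × ℝ | z.1 ∈ Set.Icc (0 : ℝ) 1 ∧ z.2 ∈ Set.Icc (0 : ℝ) 1 ∧ |z.1 - z.2| = ε}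

/-- First component `Y_A` of the mode-1 probability current `Y₁ = p₁X₁ − (σ₁²/2)∇p₁`. -/
noncomputable def YA (σ : ℝ) (X : ℝ × ℝ → ℝ × ℝ) (p : ℝ × ℝ → ℝ) (z : ℝ × ℝ) : ℝ :=
  p z * (X z).1 - σ ^ 2 / 2 * pdx p z

/-- Second component `Y_B` of the mode-1 probability current `Y₁ = p₁X₁ − (σ₁²/2)∇p₁`. -/
noncomputable def YB (σ : ℝ) (X : ℝ × ℝ → ℝ × ℝ) (p : ℝ × ℝ → ℝ) (z : ℝ × ℝ) : ℝ :=
  p z * (X z).2 - σ ^ 2 / 2 * pdy p z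

/-- Mode-2 probability current `Y₂ = X₂p₂ − (σ₂²/2)p₂′`. -/
noncomputable def Y2cur (σ : ℝ) (X : ℝ → ℝ) (p : ℝ → ℝ) (x : ℝ) : ℝ :=
  X x * p x - σ ^ 2 / 2 * deriv p x

/-- The mode-2 source density `s₂` induced by the outward guard flux of the mode-1
current under the midpoint reset map. -/
noncomputable def s2 (ε σ₁ : ℝ) (X₁ : ℝ × ℝ → ℝ × ℝ) (p₁ : ℝ × ℝ → ℝ) (xC : ℝ) : ℝ :=
  (YB σ₁ X₁ p₁ (xC + ε / 2, xC - ε / 2) - YA σ₁ X₁ p₁ (xC + ε / 2, xC - ε / 2))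
    + (YA σ₁ X₁ p₁ (xC - ε / 2, xC + ε / 2) - YB σ₁ X₁ p₁ (xC - ε / 2, xC + ε / 2))

open Set

section HybridAux
lemma pdx_add {a b : ℝ × ℝ → ℝ} {z : ℝ × ℝ} (ha : DifferentiableAt ℝ a z)
    (hb : DifferentiableAt ℝ b z) :
    pdx (fun w => a w + b w) z = pdx a z + pdx b z := by
  simp [pdx, fderiv_fun_add ha hb]

lemma pdx_mul {a b : ℝ × ℝ → ℝ} {z : ℝ × ℝ} (ha : DifferentiableAt ℝ a z)
    (hb : DifferentiableAt ℝ b z) :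
    pdx (fun w => a w * b w) z = a z * pdx b z + pdx a z * b z := by
  simp [pdx, fderiv_fun_mul ha hb, mul_comm]

lemma pdx_const_mul {a : ℝ × ℝ → ℝ} {z : ℝ × ℝ} (c : ℝ) (ha : DifferentiableAt ℝ a z) :
    pdx (fun w => c * a w) z = c * pdx a z := by
  simp [pdx, fderiv_const_mul ha]

lemma pdy_add {a b : ℝ × ℝ → ℝ} {z : ℝ × ℝ} (ha : DifferentiableAt ℝ a z)
    (hb : DifferentiableAt ℝ b z) :
    pdy (fun w => a w + b w) z = pdy a z + pdy b z := by
  simp [pdy, fderiv_fun_add ha hb]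

lemma pdy_mul {a b : ℝ × ℝ → ℝ} {z : ℝ × ℝ} (ha : DifferentiableAt ℝ a z)
    (hb : DifferentiableAt ℝ b z) :
    pdy (fun w => a w * b w) z = a z * pdy b z + pdy a z * b z := by
  simp [pdy, fderiv_fun_mul ha hb, mul_comm]

lemma pdy_const_mul {a : ℝ × ℝ → ℝ} {z : ℝ × ℝ} (c : ℝ) (ha : DifferentiableAt ℝ a z) :
    pdy (fun w => c * a w) z = c * pdy a z := by
  simp [pdy, fderiv_const_mul ha]
lemma pointwise_div (σ₁ : ℝ) (X₁ : ℝ × ℝ → ℝ × ℝ) (p₁ f₁ : ℝ × ℝ → ℝ) (z : ℝ × ℝ)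
    (hp : DifferentiableAt ℝ p₁ z) (hf : DifferentiableAt ℝ f₁ z)
    (hX : DifferentiableAt ℝ X₁ z)
    (hpx : DifferentiableAt ℝ (pdx p₁) z) (hpy : DifferentiableAt ℝ (pdy p₁) z)
    (hfx : DifferentiableAt ℝ (pdx f₁) z) (hfy : DifferentiableAt ℝ (pdy f₁) z) :
    pdx (fun w => f₁ w * YA σ₁ X₁ p₁ w + σ₁ ^ 2 / 2 * (p₁ w * pdx f₁ w)) z
      + pdy (fun w => f₁ w * YB σ₁ X₁ p₁ w + σ₁ ^ 2 / 2 * (p₁ w * pdy f₁ w)) z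
    = p₁ z * ((X₁ z).1 * pdx f₁ z + (X₁ z).2 * pdy f₁ z + σ₁ ^ 2 / 2 * lap f₁ z)
      + f₁ z * (pdx (YA σ₁ X₁ p₁) z + pdy (YB σ₁ X₁ p₁) z) := by
  have hX1 : DifferentiableAt ℝ (fun w => (X₁ w).1) z := hX.fst
  have hX2 : DifferentiableAt ℝ (fun w => (X₁ w).2) z := hX.snd
  have hYA : DifferentiableAt ℝ (YA σ₁ X₁ p₁) z := by
    exact (hp.mul hX1).sub ((differentiableAt_const _).mul hpx)
  have hYB : DifferentiableAt ℝ (YB σ₁ X₁ p₁) z := by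
    exact (hp.mul hX2).sub ((differentiableAt_const _).mul hpy)
  have h1 : pdx (fun w => f₁ w * YA σ₁ X₁ p₁ w + σ₁ ^ 2 / 2 * (p₁ w * pdx f₁ w)) z
      = (f₁ z * pdx (YA σ₁ X₁ p₁) z + pdx f₁ z * YA σ₁ X₁ p₁ z)
        + σ₁ ^ 2 / 2 * (p₁ z * pdx (pdx f₁) z + pdx p₁ z * pdx f₁ z) := by
    rw [pdx_add (a := fun w => f₁ w * YA σ₁ X₁ p₁ w) (b := fun w => σ₁ ^ 2 / 2 * (p₁ w * pdx f₁ w))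
        (hf.mul hYA) ((differentiableAt_const _).mul (hp.mul hfx)),
      pdx_mul hf hYA, pdx_const_mul (a := fun w => p₁ w * pdx f₁ w) _ (hp.mul hfx), pdx_mul hp hfx]
  have h2 : pdy (fun w => f₁ w * YB σ₁ X₁ p₁ w + σ₁ ^ 2 / 2 * (p₁ w * pdy f₁ w)) z
      = (f₁ z * pdy (YB σ₁ X₁ p₁) z + pdy f₁ z * YB σ₁ X₁ p₁ z)
        + σ₁ ^ 2 / 2 * (p₁ z * pdy (pdy f₁) z + pdy p₁ z * pdy f₁ z) := by
    rw [pdy_add (a := fun w => f₁ w * YB σ₁ X₁ p₁ w) (b := fun w => σ₁ ^ 2 / 2 * (p₁ w * pdy f₁ w))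
        (hf.mul hYB) ((differentiableAt_const _).mul (hp.mul hfy)),
      pdy_mul hf hYB, pdy_const_mul (a := fun w => p₁ w * pdy f₁ w) _ (hp.mul hfy), pdy_mul hp hfy]
  rw [h1, h2]
  have hva : YA σ₁ X₁ p₁ z = p₁ z * (X₁ z).1 - σ₁ ^ 2 / 2 * pdx p₁ z := rfl
  have hvb : YB σ₁ X₁ p₁ z = p₁ z * (X₁ z).2 - σ₁ ^ 2 / 2 * pdy p₁ z := rfl
  rw [hva, hvb, lap]
  ring
lemma slice_x (F : ℝ × ℝ → ℝ) (U : Set (ℝ × ℝ)) (hU : IsOpen U) (hF : ContDiffOn ℝ 1 F U)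
    (K : Set (ℝ × ℝ)) (hK : IsCompact K) (hKU : K ⊆ U)
    (a b : ℝ) (hab : a ≤ b) (l u : ℝ → ℝ)
    (hlu : ∀ y ∈ Icc a b, l y ≤ u y)
    (hseg : ∀ y ∈ Icc a b, ∀ x ∈ Icc (l y) (u y), (x, y) ∈ K)
    (S : Set (ℝ × ℝ)) (hS : MeasurableSet S)
    (hsec : ∀ x y : ℝ, (x, y) ∈ S ↔ y ∈ Ioo a b ∧ x ∈ Ioo (l y) (u y)) :
    ∫ z in S, pdx F z = ∫ y in a..b, (F (u y, y) - F (l y, y)) := by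
  have hSK : S ⊆ K := by
    rintro ⟨x, y⟩ hz
    obtain ⟨hy, hx⟩ := (hsec x y).1 hz
    exact hseg y (Ioo_subset_Icc_self hy) x (Ioo_subset_Icc_self hx)
  have hcont : ContinuousOn (fun z => pdx F z) U := by
    have h1 := hF.continuousOn_fderiv_of_isOpen hU le_rfl
    exact h1.clm_apply continuousOn_const
  have hint : IntegrableOn (fun z => pdx F z) S := by
    exact (((hcont.mono hKU).integrableOn_compact hK).mono_set hSK)
  have hindint : Integrable (S.indicator fun z => pdx F z) volume :=
    (integrable_indicator_iff hS).2 hint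
  rw [← integral_indicator hS]
  rw [show (volume : Measure (ℝ × ℝ)) = (volume : Measure ℝ).prod volume from
    (MeasureTheory.Measure.volume_eq_prod ℝ ℝ)] at hindint ⊢
  rw [MeasureTheory.integral_prod_symm _ hindint]
  have key : ∀ y : ℝ, (∫ x : ℝ, S.indicator (fun z => pdx F z) (x, y))
      = (Ioo a b).indicator (fun y => F (u y, y) - F (l y, y)) y := by
    intro y
    by_cases hy : y ∈ Ioo a b
    · have hyI : y ∈ Icc a b := Ioo_subset_Icc_self hy
      have hsecfun : (fun x => S.indicator (fun z => pdx F z) (x, y))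
          = (Ioo (l y) (u y)).indicator (fun x => pdx F (x, y)) := by
        funext x
        by_cases hx : x ∈ Ioo (l y) (u y)
        · rw [indicator_of_mem ((hsec x y).2 ⟨hy, hx⟩), indicator_of_mem hx]
        · rw [indicator_of_notMem (fun h => hx ((hsec x y).1 h).2),
            indicator_of_notMem hx]
      rw [hsecfun, integral_indicator measurableSet_Ioo, indicator_of_mem hy,
        ← MeasureTheory.integral_Ioc_eq_integral_Ioo,
        ← intervalIntegral.integral_of_le (hlu y hyI)]
      have hder : ∀ x ∈ uIcc (l y) (u y), HasDerivAt (fun x => F (x, y)) (pdx F (x, y)) x := by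
        intro x hx
        rw [uIcc_of_le (hlu y hyI)] at hx
        have hmem : (x, y) ∈ U := hKU (hseg y hyI x hx)
        have hfd : HasFDerivAt F (fderiv ℝ F (x, y)) (x, y) :=
          (((hF.differentiableOn one_ne_zero).differentiableAt (hU.mem_nhds hmem))).hasFDerivAt
        have hcurve : HasDerivAt (fun t : ℝ => ((t : ℝ), y)) ((1 : ℝ), (0 : ℝ)) x :=
          (hasDerivAt_id x).prodMk (hasDerivAt_const x y)
        simpa [pdx, Function.comp_def] using hfd.comp_hasDerivAt x hcurve
      have hic : IntervalIntegrable (fun x => pdx F (x, y)) volume (l y) (u y) := by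
        apply ContinuousOn.intervalIntegrable
        rw [uIcc_of_le (hlu y hyI)]
        exact hcont.comp ((continuous_id.prodMk continuous_const).continuousOn)
          (fun x hx => hKU (hseg y hyI x hx))
      exact intervalIntegral.integral_eq_sub_of_hasDerivAt hder hic
    · rw [indicator_of_notMem hy]
      have : (fun x => S.indicator (fun z => pdx F z) (x, y)) = fun _ => (0 : ℝ) := by
        funext x
        exact indicator_of_notMem (fun h => hy ((hsec x y).1 h).1) _
      rw [this, integral_zero]
  simp_rw [key]
  rw [integral_indicator measurableSet_Ioo, ← MeasureTheory.integral_Ioc_eq_integral_Ioo,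
    ← intervalIntegral.integral_of_le hab]
lemma slice_y (F : ℝ × ℝ → ℝ) (U : Set (ℝ × ℝ)) (hU : IsOpen U) (hF : ContDiffOn ℝ 1 F U)
    (K : Set (ℝ × ℝ)) (hK : IsCompact K) (hKU : K ⊆ U)
    (a b : ℝ) (hab : a ≤ b) (l u : ℝ → ℝ)
    (hlu : ∀ x ∈ Icc a b, l x ≤ u x)
    (hseg : ∀ x ∈ Icc a b, ∀ y ∈ Icc (l x) (u x), (x, y) ∈ K)
    (S : Set (ℝ × ℝ)) (hS : MeasurableSet S)
    (hsec : ∀ x y : ℝ, (x, y) ∈ S ↔ x ∈ Ioo a b ∧ y ∈ Ioo (l x) (u x)) :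
    ∫ z in S, pdy F z = ∫ x in a..b, (F (x, u x) - F (x, l x)) := by
  have hSK : S ⊆ K := by
    rintro ⟨x, y⟩ hz
    obtain ⟨hx, hy⟩ := (hsec x y).1 hz
    exact hseg x (Ioo_subset_Icc_self hx) y (Ioo_subset_Icc_self hy)
  have hcont : ContinuousOn (fun z => pdy F z) U := by
    have h1 := hF.continuousOn_fderiv_of_isOpen hU le_rfl
    exact h1.clm_apply continuousOn_const
  have hint : IntegrableOn (fun z => pdy F z) S := by
    exact (((hcont.mono hKU).integrableOn_compact hK).mono_set hSK)
  have hindint : Integrable (S.indicator fun z => pdy F z) volume :=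
    (integrable_indicator_iff hS).2 hint
  rw [← integral_indicator hS]
  rw [show (volume : Measure (ℝ × ℝ)) = (volume : Measure ℝ).prod volume from
    (MeasureTheory.Measure.volume_eq_prod ℝ ℝ)] at hindint ⊢
  rw [MeasureTheory.integral_prod _ hindint]
  have key : ∀ x : ℝ, (∫ y : ℝ, S.indicator (fun z => pdy F z) (x, y))
      = (Ioo a b).indicator (fun x => F (x, u x) - F (x, l x)) x := by
    intro x
    by_cases hx : x ∈ Ioo a b
    · have hxI : x ∈ Icc a b := Ioo_subset_Icc_self hx
      have hsecfun : (fun y => S.indicator (fun z => pdy F z) (x, y))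
          = (Ioo (l x) (u x)).indicator (fun y => pdy F (x, y)) := by
        funext y
        by_cases hy : y ∈ Ioo (l x) (u x)
        · rw [indicator_of_mem ((hsec x y).2 ⟨hx, hy⟩), indicator_of_mem hy]
        · rw [indicator_of_notMem (fun h => hy ((hsec x y).1 h).2),
            indicator_of_notMem hy]
      rw [hsecfun, integral_indicator measurableSet_Ioo, indicator_of_mem hx,
        ← MeasureTheory.integral_Ioc_eq_integral_Ioo,
        ← intervalIntegral.integral_of_le (hlu x hxI)]
      have hder : ∀ y ∈ uIcc (l x) (u x), HasDerivAt (fun y => F (x, y)) (pdy F (x, y)) y := by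
        intro y hy
        rw [uIcc_of_le (hlu x hxI)] at hy
        have hmem : (x, y) ∈ U := hKU (hseg x hxI y hy)
        have hfd : HasFDerivAt F (fderiv ℝ F (x, y)) (x, y) :=
          (((hF.differentiableOn one_ne_zero).differentiableAt (hU.mem_nhds hmem))).hasFDerivAt
        have hcurve : HasDerivAt (fun t : ℝ => (x, (t : ℝ))) ((0 : ℝ), (1 : ℝ)) y :=
          (hasDerivAt_const y x).prodMk (hasDerivAt_id y)
        simpa [pdy, Function.comp_def] using hfd.comp_hasDerivAt y hcurve
      have hic : IntervalIntegrable (fun y => pdy F (x, y)) volume (l x) (u x) := by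
        apply ContinuousOn.intervalIntegrable
        rw [uIcc_of_le (hlu x hxI)]
        exact hcont.comp ((continuous_const.prodMk continuous_id).continuousOn)
          (fun y hy => hKU (hseg x hxI y hy))
      exact intervalIntegral.integral_eq_sub_of_hasDerivAt hder hic
    · rw [indicator_of_notMem hx]
      have : (fun y => S.indicator (fun z => pdy F z) (x, y)) = fun _ => (0 : ℝ) := by
        funext y
        exact indicator_of_notMem (fun h => hx ((hsec x y).1 h).1) _
      rw [this, integral_zero]
  simp_rw [key]
  rw [integral_indicator measurableSet_Ioo, ← MeasureTheory.integral_Ioc_eq_integral_Ioo,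
    ← intervalIntegral.integral_of_le hab]
def Tri1 (ε : ℝ) : Set (ℝ × ℝ) := {z : ℝ × ℝ | ε < z.1 - z.2 ∧ z.1 < 1 ∧ 0 < z.2}
def Tri2 (ε : ℝ) : Set (ℝ × ℝ) := {z : ℝ × ℝ | ε < z.2 - z.1 ∧ z.2 < 1 ∧ 0 < z.1}
def Ktri1 (ε : ℝ) : Set (ℝ × ℝ) := {z : ℝ × ℝ | ε ≤ z.1 - z.2 ∧ z.1 ≤ 1 ∧ 0 ≤ z.2}
def Ktri2 (ε : ℝ) : Set (ℝ × ℝ) := {z : ℝ × ℝ | ε ≤ z.2 - z.1 ∧ z.2 ≤ 1 ∧ 0 ≤ z.1}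

lemma omega_union (ε : ℝ) (hε : 0 < ε) : OmegaEps ε = Tri1 ε ∪ Tri2 ε := by
  ext ⟨x, y⟩
  simp only [OmegaEps, Tri1, Tri2, mem_setOf_eq, mem_union]
  constructor
  · rintro ⟨h1, h2, h3, h4, h5⟩
    rcases lt_abs.1 h5 with h | h
    · exact Or.inl ⟨h, h2, h3⟩
    · exact Or.inr ⟨by linarith, h4, h1⟩
  · rintro (⟨h1, h2, h3⟩ | ⟨h1, h2, h3⟩)
    · exact ⟨by linarith, h2, h3, by linarith, lt_abs.2 (Or.inl h1)⟩
    · exact ⟨h3, by linarith, by linarith, h2, lt_abs.2 (Or.inr (by linarith))⟩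

lemma tri_disjoint (ε : ℝ) (hε : 0 < ε) : Disjoint (Tri1 ε) (Tri2 ε) := by
  rw [Set.disjoint_left]
  rintro ⟨x, y⟩ ⟨h1, _, _⟩ ⟨h2, _, _⟩
  simp only at h1 h2
  linarith

lemma tri1_measurable (ε : ℝ) : MeasurableSet (Tri1 ε) := by
  apply MeasurableSet.inter
  · exact measurableSet_lt measurable_const (measurable_fst.sub measurable_snd)
  apply MeasurableSet.inter
  · exact measurableSet_lt measurable_fst measurable_const
  · exact measurableSet_lt measurable_const measurable_snd

lemma tri2_measurable (ε : ℝ) : MeasurableSet (Tri2 ε) := by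
  apply MeasurableSet.inter
  · exact measurableSet_lt measurable_const (measurable_snd.sub measurable_fst)
  apply MeasurableSet.inter
  · exact measurableSet_lt measurable_snd measurable_const
  · exact measurableSet_lt measurable_const measurable_fst

lemma ktri1_compact (ε : ℝ) (hε : 0 < ε) : IsCompact (Ktri1 ε) := by
  apply Metric.isCompact_of_isClosed_isBounded
  · have : Ktri1 ε = {z : ℝ × ℝ | ε ≤ z.1 - z.2} ∩ ({z | z.1 ≤ 1} ∩ {z | 0 ≤ z.2}) := rfl
    rw [this]
    exact ((isClosed_le continuous_const (continuous_fst.sub continuous_snd)).inter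
      ((isClosed_le continuous_fst continuous_const).inter
        (isClosed_le continuous_const continuous_snd)))
  · apply Bornology.IsBounded.subset ((Metric.isBounded_Icc (0:ℝ) 1).prod (Metric.isBounded_Icc (0:ℝ) 1))
    rintro ⟨x, y⟩ ⟨h1, h2, h3⟩
    exact ⟨⟨by simp only at *; linarith, by simpa using h2⟩, ⟨by simpa using h3, by simp only at *; linarith⟩⟩

lemma ktri2_compact (ε : ℝ) (hε : 0 < ε) : IsCompact (Ktri2 ε) := by
  apply Metric.isCompact_of_isClosed_isBounded
  · have : Ktri2 ε = {z : ℝ × ℝ | ε ≤ z.2 - z.1} ∩ ({z | z.2 ≤ 1} ∩ {z | 0 ≤ z.1}) := rfl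
    rw [this]
    exact ((isClosed_le continuous_const (continuous_snd.sub continuous_fst)).inter
      ((isClosed_le continuous_snd continuous_const).inter
        (isClosed_le continuous_const continuous_fst)))
  · apply Bornology.IsBounded.subset ((Metric.isBounded_Icc (0:ℝ) 1).prod (Metric.isBounded_Icc (0:ℝ) 1))
    rintro ⟨x, y⟩ ⟨h1, h2, h3⟩
    exact ⟨⟨by simpa using h3, by simp only at *; linarith⟩, ⟨by simp only at *; linarith, by simpa using h2⟩⟩

lemma mem_closure_of_segment {s : Set (ℝ × ℝ)} (z w : ℝ × ℝ)
    (h : ∀ t : ℝ, t ∈ Set.Ioo (0:ℝ) 1 → z + t • (w - z) ∈ s) :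
    z ∈ closure s := by
  have htend : Filter.Tendsto (fun t : ℝ => z + t • (w - z)) (nhdsWithin 0 (Set.Ioo 0 1)) (nhds z) := by
    have hc : Continuous (fun t : ℝ => z + t • (w - z)) := by continuity
    have := hc.tendsto 0
    simp only [zero_smul, add_zero] at this
    exact this.mono_left nhdsWithin_le_nhds
  have hne : (nhdsWithin (0:ℝ) (Set.Ioo 0 1)).NeBot := by
    apply mem_closure_iff_nhdsWithin_neBot.1
    rw [closure_Ioo one_ne_zero.symm]
    exact ⟨le_refl 0, zero_le_one⟩
  exact mem_closure_of_tendsto htend (Filter.eventually_of_mem self_mem_nhdsWithin h)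

lemma ktri1_subset_closure (ε : ℝ) (hε : 0 < ε) (hε1 : ε < 1) :
    Ktri1 ε ⊆ closure (OmegaEps ε) := by
  rintro ⟨x, y⟩ ⟨h1, h2, h3⟩
  simp only at h1 h2 h3
  apply mem_closure_of_segment (x, y) ((3 + ε) / 4, (1 - ε) / 4)
  rintro t ⟨ht0, ht1⟩
  refine ⟨?_, ?_, ?_, ?_, ?_⟩
  · show (0:ℝ) < x + t * ((3 + ε) / 4 - x)
    nlinarith
  · show x + t * ((3 + ε) / 4 - x) < 1
    nlinarith
  · show (0:ℝ) < y + t * ((1 - ε) / 4 - y)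
    nlinarith
  · show y + t * ((1 - ε) / 4 - y) < 1
    nlinarith
  · show ε < |x + t * ((3 + ε) / 4 - x) - (y + t * ((1 - ε) / 4 - y))|
    apply lt_abs.2 (Or.inl ?_)
    nlinarith

lemma ktri2_subset_closure (ε : ℝ) (hε : 0 < ε) (hε1 : ε < 1) :
    Ktri2 ε ⊆ closure (OmegaEps ε) := by
  rintro ⟨x, y⟩ ⟨h1, h2, h3⟩
  simp only at h1 h2 h3
  apply mem_closure_of_segment (x, y) ((1 - ε) / 4, (3 + ε) / 4)
  rintro t ⟨ht0, ht1⟩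
  refine ⟨?_, ?_, ?_, ?_, ?_⟩
  · show (0:ℝ) < x + t * ((1 - ε) / 4 - x)
    nlinarith
  · show x + t * ((1 - ε) / 4 - x) < 1
    nlinarith
  · show (0:ℝ) < y + t * ((3 + ε) / 4 - y)
    nlinarith
  · show y + t * ((3 + ε) / 4 - y) < 1
    nlinarith
  · show ε < |x + t * ((1 - ε) / 4 - x) - (y + t * ((3 + ε) / 4 - y))|
    apply lt_abs.2 (Or.inr ?_)
    nlinarith
lemma oneD (σ₂ : ℝ) (X₂ : ℝ → ℝ) (hX₂ : ContDiff ℝ 1 X₂)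
    (p₂ : ℝ → ℝ) (U₂ : Set ℝ) (hU₂ : IsOpen U₂) (hIU₂ : Icc (0:ℝ) 1 ⊆ U₂)
    (hp₂ : ContDiffOn ℝ 2 p₂ U₂)
    (f₂ : ℝ → ℝ) (V₂ : Set ℝ) (hV₂ : IsOpen V₂) (hIV₂ : Icc (0:ℝ) 1 ⊆ V₂)
    (hf₂ : ContDiffOn ℝ 2 f₂ V₂) :
    (∫ x in (0:ℝ)..1, p₂ x * (X₂ x * deriv f₂ x + σ₂ ^ 2 / 2 * deriv (deriv f₂) x))
      + (∫ x in (0:ℝ)..1, f₂ x * deriv (Y2cur σ₂ X₂ p₂) x)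
    = (f₂ 1 * Y2cur σ₂ X₂ p₂ 1 + σ₂ ^ 2 / 2 * (p₂ 1 * deriv f₂ 1))
      - (f₂ 0 * Y2cur σ₂ X₂ p₂ 0 + σ₂ ^ 2 / 2 * (p₂ 0 * deriv f₂ 0)) := by
  set W := U₂ ∩ V₂ with hWdef
  have hW : IsOpen W := hU₂.inter hV₂
  have hIW : Icc (0:ℝ) 1 ⊆ W := subset_inter hIU₂ hIV₂
  have hdp₂ : ContDiffOn ℝ 1 (deriv p₂) U₂ := hp₂.deriv_of_isOpen hU₂ (by norm_num)
  have hdf₂ : ContDiffOn ℝ 1 (deriv f₂) V₂ := hf₂.deriv_of_isOpen hV₂ (by norm_num)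
  -- differentiability at points of W
  have hdiff : ∀ x ∈ W, DifferentiableAt ℝ p₂ x ∧ DifferentiableAt ℝ f₂ x
      ∧ DifferentiableAt ℝ (deriv p₂) x ∧ DifferentiableAt ℝ (deriv f₂) x := by
    intro x hx
    refine ⟨((hp₂.differentiableOn (by norm_num)).differentiableAt
        (hU₂.mem_nhds hx.1)), ((hf₂.differentiableOn (by norm_num)).differentiableAt
        (hV₂.mem_nhds hx.2)), ((hdp₂.differentiableOn one_ne_zero).differentiableAt
        (hU₂.mem_nhds hx.1)), ((hdf₂.differentiableOn one_ne_zero).differentiableAt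
        (hV₂.mem_nhds hx.2))⟩
  have hY2d : ∀ x ∈ W, DifferentiableAt ℝ (Y2cur σ₂ X₂ p₂) x := by
    intro x hx
    obtain ⟨h1, _, h3, _⟩ := hdiff x hx
    exact ((hX₂.differentiable one_ne_zero x).mul h1).sub ((differentiableAt_const _).mul h3)
  have hG : ∀ x ∈ uIcc (0:ℝ) 1,
      HasDerivAt (fun x => f₂ x * Y2cur σ₂ X₂ p₂ x + σ₂ ^ 2 / 2 * (p₂ x * deriv f₂ x))
        (p₂ x * (X₂ x * deriv f₂ x + σ₂ ^ 2 / 2 * deriv (deriv f₂) x)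
          + f₂ x * deriv (Y2cur σ₂ X₂ p₂) x) x := by
    intro x hx
    rw [uIcc_of_le (by norm_num : (0:ℝ) ≤ 1)] at hx
    have hxW : x ∈ W := hIW hx
    obtain ⟨h1, h2, h3, h4⟩ := hdiff x hxW
    have hy := hY2d x hxW
    have hG0 : HasDerivAt (fun x => f₂ x * Y2cur σ₂ X₂ p₂ x + σ₂ ^ 2 / 2 * (p₂ x * deriv f₂ x))
        ((deriv f₂ x * Y2cur σ₂ X₂ p₂ x + f₂ x * deriv (Y2cur σ₂ X₂ p₂) x)
          + σ₂ ^ 2 / 2 * (deriv p₂ x * deriv f₂ x + p₂ x * deriv (deriv f₂) x)) x := by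
      exact (h2.hasDerivAt.mul hy.hasDerivAt).add
        ((h1.hasDerivAt.mul h4.hasDerivAt).const_mul (σ₂ ^ 2 / 2))
    have heq : (deriv f₂ x * Y2cur σ₂ X₂ p₂ x + f₂ x * deriv (Y2cur σ₂ X₂ p₂) x)
          + σ₂ ^ 2 / 2 * (deriv p₂ x * deriv f₂ x + p₂ x * deriv (deriv f₂) x)
        = p₂ x * (X₂ x * deriv f₂ x + σ₂ ^ 2 / 2 * deriv (deriv f₂) x)
          + f₂ x * deriv (Y2cur σ₂ X₂ p₂) x := by
      have : Y2cur σ₂ X₂ p₂ x = X₂ x * p₂ x - σ₂ ^ 2 / 2 * deriv p₂ x := rfl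
      rw [this]; ring
    exact heq ▸ hG0
  -- interval integrability
  have hY2c : ContinuousOn (fun x => deriv (Y2cur σ₂ X₂ p₂) x) W := by
    have : ContDiffOn ℝ 1 (Y2cur σ₂ X₂ p₂) W := by
      refine ((hX₂.contDiffOn.mul ((hp₂.of_le (by norm_num)).mono inter_subset_left)).sub
        (contDiffOn_const.mul (hdp₂.mono inter_subset_left)))
    exact this.continuousOn_deriv_of_isOpen hW le_rfl
  have hic1 : IntervalIntegrable
      (fun x => p₂ x * (X₂ x * deriv f₂ x + σ₂ ^ 2 / 2 * deriv (deriv f₂) x)) volume 0 1 := by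
    apply ContinuousOn.intervalIntegrable
    rw [uIcc_of_le (by norm_num : (0:ℝ) ≤ 1)]
    have hddf : ContinuousOn (deriv (deriv f₂)) V₂ :=
      hdf₂.continuousOn_deriv_of_isOpen hV₂ le_rfl
    exact (((hp₂.continuousOn.mono inter_subset_left).mul
      (((hX₂.continuous.continuousOn).mul ((hdf₂.continuousOn).mono inter_subset_right)).add
        (continuousOn_const.mul (hddf.mono inter_subset_right))))).mono hIW
  have hic2 : IntervalIntegrable (fun x => f₂ x * deriv (Y2cur σ₂ X₂ p₂) x) volume 0 1 := by
    apply ContinuousOn.intervalIntegrable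
    rw [uIcc_of_le (by norm_num : (0:ℝ) ≤ 1)]
    exact (((hf₂.continuousOn.mono inter_subset_right).mul hY2c)).mono hIW
  rw [← intervalIntegral.integral_add hic1 hic2]
  exact intervalIntegral.integral_eq_sub_of_hasDerivAt hG (hic1.add hic2)
lemma twoD (ε σ₁ : ℝ) (hε0 : 0 < ε) (hε1 : ε < 1)
    (X₁ : ℝ × ℝ → ℝ × ℝ) (hX₁ : ContDiff ℝ 1 X₁)
    (p₁ : ℝ × ℝ → ℝ) (U₁ : Set (ℝ × ℝ)) (hU₁ : IsOpen U₁)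
    (hclU₁ : closure (OmegaEps ε) ⊆ U₁) (hp₁ : ContDiffOn ℝ 2 p₁ U₁)
    (f₁ : ℝ × ℝ → ℝ) (V₁ : Set (ℝ × ℝ)) (hV₁ : IsOpen V₁)
    (hclV₁ : closure (OmegaEps ε) ⊆ V₁) (hf₁ : ContDiffOn ℝ 2 f₁ V₁)
    (hp₁guard : ∀ z ∈ GuardEps ε, p₁ z = 0)
    (hrefl_A : ∀ y ∈ Set.Icc (0 : ℝ) 1,
      YA σ₁ X₁ p₁ (0, y) = 0 ∧ YA σ₁ X₁ p₁ (1, y) = 0)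
    (hrefl_B : ∀ x ∈ Set.Icc (0 : ℝ) 1,
      YB σ₁ X₁ p₁ (x, 0) = 0 ∧ YB σ₁ X₁ p₁ (x, 1) = 0)
    (f₂ : ℝ → ℝ)
    (hcomp₁ : ∀ z ∈ GuardEps ε, f₁ z = f₂ ((z.1 + z.2) / 2))
    (hNeu_A : ∀ y ∈ Set.Icc (0 : ℝ) 1, pdx f₁ (0, y) = 0 ∧ pdx f₁ (1, y) = 0)
    (hNeu_B : ∀ x ∈ Set.Icc (0 : ℝ) 1, pdy f₁ (x, 0) = 0 ∧ pdy f₁ (x, 1) = 0) :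
    (∫ z in OmegaEps ε,
        p₁ z * ((X₁ z).1 * pdx f₁ z + (X₁ z).2 * pdy f₁ z + σ₁ ^ 2 / 2 * lap f₁ z))
      + (∫ z in OmegaEps ε,
          f₁ z * (pdx (YA σ₁ X₁ p₁) z + pdy (YB σ₁ X₁ p₁) z))
      = ∫ xC in (ε / 2)..(1 - ε / 2), f₂ xC * s2 ε σ₁ X₁ p₁ xC := by
  set W : Set (ℝ × ℝ) := U₁ ∩ V₁ with hWdef
  have hW : IsOpen W := hU₁.inter hV₁
  have hclW : closure (OmegaEps ε) ⊆ W := subset_inter hclU₁ hclV₁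
  have hOW : OmegaEps ε ⊆ W := subset_closure.trans hclW
  have hK1W : Ktri1 ε ⊆ W := (ktri1_subset_closure ε hε0 hε1).trans hclW
  have hK2W : Ktri2 ε ⊆ W := (ktri2_subset_closure ε hε0 hε1).trans hclW
  have hT1K : Tri1 ε ⊆ Ktri1 ε := fun z hz => ⟨le_of_lt hz.1, le_of_lt hz.2.1, le_of_lt hz.2.2⟩
  have hT2K : Tri2 ε ⊆ Ktri2 ε := fun z hz => ⟨le_of_lt hz.1, le_of_lt hz.2.1, le_of_lt hz.2.2⟩
  -- derivative smoothness
  have hpdx_p : ContDiffOn ℝ 1 (pdx p₁) U₁ :=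
    (hp₁.fderiv_of_isOpen hU₁ (by norm_num)).clm_apply contDiffOn_const
  have hpdy_p : ContDiffOn ℝ 1 (pdy p₁) U₁ :=
    (hp₁.fderiv_of_isOpen hU₁ (by norm_num)).clm_apply contDiffOn_const
  have hpdx_f : ContDiffOn ℝ 1 (pdx f₁) V₁ :=
    (hf₁.fderiv_of_isOpen hV₁ (by norm_num)).clm_apply contDiffOn_const
  have hpdy_f : ContDiffOn ℝ 1 (pdy f₁) V₁ :=
    (hf₁.fderiv_of_isOpen hV₁ (by norm_num)).clm_apply contDiffOn_const
  have hp₁W : ContDiffOn ℝ 1 p₁ W := (hp₁.of_le (by norm_num)).mono inter_subset_left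
  have hf₁W : ContDiffOn ℝ 1 f₁ W := (hf₁.of_le (by norm_num)).mono inter_subset_right
  have hYA : ContDiffOn ℝ 1 (YA σ₁ X₁ p₁) W := by
    exact (hp₁W.mul hX₁.contDiffOn.fst).sub
      (contDiffOn_const.mul (hpdx_p.mono inter_subset_left))
  have hYB : ContDiffOn ℝ 1 (YB σ₁ X₁ p₁) W := by
    exact (hp₁W.mul hX₁.contDiffOn.snd).sub
      (contDiffOn_const.mul (hpdy_p.mono inter_subset_left))
  set FA : ℝ × ℝ → ℝ :=
    fun w => f₁ w * YA σ₁ X₁ p₁ w + σ₁ ^ 2 / 2 * (p₁ w * pdx f₁ w) with hFAdef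
  set FB : ℝ × ℝ → ℝ :=
    fun w => f₁ w * YB σ₁ X₁ p₁ w + σ₁ ^ 2 / 2 * (p₁ w * pdy f₁ w) with hFBdef
  have hFA : ContDiffOn ℝ 1 FA W := by
    rw [hFAdef]
    exact (hf₁W.mul hYA).add
      (contDiffOn_const.mul (hp₁W.mul (hpdx_f.mono inter_subset_right)))
  have hFB : ContDiffOn ℝ 1 FB W := by
    rw [hFBdef]
    exact (hf₁W.mul hYB).add
      (contDiffOn_const.mul (hp₁W.mul (hpdy_f.mono inter_subset_right)))
  -- continuity of the integrands
  have hcont_i1 : ContinuousOn (fun z =>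
      p₁ z * ((X₁ z).1 * pdx f₁ z + (X₁ z).2 * pdy f₁ z + σ₁ ^ 2 / 2 * lap f₁ z)) W := by
    have hxx : ContinuousOn (fun z => pdx (pdx f₁) z) V₁ :=
      (hpdx_f.continuousOn_fderiv_of_isOpen hV₁ le_rfl).clm_apply continuousOn_const
    have hyy : ContinuousOn (fun z => pdy (pdy f₁) z) V₁ :=
      (hpdy_f.continuousOn_fderiv_of_isOpen hV₁ le_rfl).clm_apply continuousOn_const
    have hlapc : ContinuousOn (fun z => lap f₁ z) W := (hxx.add hyy).mono inter_subset_right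
    have hX1c : ContinuousOn (fun z : ℝ × ℝ => (X₁ z).1) W :=
      (continuous_fst.comp hX₁.continuous).continuousOn
    have hX2c : ContinuousOn (fun z : ℝ × ℝ => (X₁ z).2) W :=
      (continuous_snd.comp hX₁.continuous).continuousOn
    exact hp₁W.continuousOn.mul
      (((hX1c.mul ((hpdx_f.continuousOn).mono inter_subset_right)).add
        (hX2c.mul ((hpdy_f.continuousOn).mono inter_subset_right))).add
        (continuousOn_const.mul hlapc))
  have hcont_i2 : ContinuousOn (fun z =>
      f₁ z * (pdx (YA σ₁ X₁ p₁) z + pdy (YB σ₁ X₁ p₁) z)) W := by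
    have h1 : ContinuousOn (fun z => pdx (YA σ₁ X₁ p₁) z) W :=
      (hYA.continuousOn_fderiv_of_isOpen hW le_rfl).clm_apply continuousOn_const
    have h2 : ContinuousOn (fun z => pdy (YB σ₁ X₁ p₁) z) W :=
      (hYB.continuousOn_fderiv_of_isOpen hW le_rfl).clm_apply continuousOn_const
    exact hf₁W.continuousOn.mul (h1.add h2)
  have hcont_div : ContinuousOn (fun z => pdx FA z + pdy FB z) W :=
    ((hFA.continuousOn_fderiv_of_isOpen hW le_rfl).clm_apply continuousOn_const).add
      ((hFB.continuousOn_fderiv_of_isOpen hW le_rfl).clm_apply continuousOn_const)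
  -- compactness and integrability
  have hbd : Bornology.IsBounded (OmegaEps ε) := by
    apply Bornology.IsBounded.subset
      ((Metric.isBounded_Icc (0:ℝ) 1).prod (Metric.isBounded_Icc (0:ℝ) 1))
    rintro ⟨x, y⟩ ⟨h1, h2, h3, h4, _⟩
    exact ⟨⟨le_of_lt h1, le_of_lt h2⟩, le_of_lt h3, le_of_lt h4⟩
  have hcls : IsCompact (closure (OmegaEps ε)) :=
    Metric.isCompact_of_isClosed_isBounded isClosed_closure hbd.closure
  have hIntOmega : ∀ g : ℝ × ℝ → ℝ, ContinuousOn g W → IntegrableOn g (OmegaEps ε) :=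
    fun g hg => ((hg.mono hclW).integrableOn_compact hcls).mono_set subset_closure
  have hIntT1 : ∀ g : ℝ × ℝ → ℝ, ContinuousOn g W → IntegrableOn g (Tri1 ε) :=
    fun g hg => ((hg.mono hclW).integrableOn_compact hcls).mono_set
      (hT1K.trans (ktri1_subset_closure ε hε0 hε1))
  have hIntT2 : ∀ g : ℝ × ℝ → ℝ, ContinuousOn g W → IntegrableOn g (Tri2 ε) :=
    fun g hg => ((hg.mono hclW).integrableOn_compact hcls).mono_set
      (hT2K.trans (ktri2_subset_closure ε hε0 hε1))
  have hmeasOmega : MeasurableSet (OmegaEps ε) := by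
    rw [omega_union ε hε0]
    exact (tri1_measurable ε).union (tri2_measurable ε)
  -- combine the two volume integrals and rewrite as a divergence
  rw [← MeasureTheory.integral_add (hIntOmega _ hcont_i1) (hIntOmega _ hcont_i2)]
  have hdiv_eq : Set.EqOn
      (fun z => p₁ z * ((X₁ z).1 * pdx f₁ z + (X₁ z).2 * pdy f₁ z + σ₁ ^ 2 / 2 * lap f₁ z)
        + f₁ z * (pdx (YA σ₁ X₁ p₁) z + pdy (YB σ₁ X₁ p₁) z))
      (fun z => pdx FA z + pdy FB z) (OmegaEps ε) := by
    intro z hz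
    have hzW : z ∈ W := hOW hz
    have hp : DifferentiableAt ℝ p₁ z :=
      ((hp₁.of_le one_le_two).differentiableOn one_ne_zero).differentiableAt
        (hU₁.mem_nhds hzW.1)
    have hf : DifferentiableAt ℝ f₁ z :=
      ((hf₁.of_le one_le_two).differentiableOn one_ne_zero).differentiableAt
        (hV₁.mem_nhds hzW.2)
    have hXd : DifferentiableAt ℝ X₁ z := (hX₁.differentiable one_ne_zero) z
    have hpx : DifferentiableAt ℝ (pdx p₁) z :=
      (hpdx_p.differentiableOn one_ne_zero).differentiableAt (hU₁.mem_nhds hzW.1)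
    have hpy : DifferentiableAt ℝ (pdy p₁) z :=
      (hpdy_p.differentiableOn one_ne_zero).differentiableAt (hU₁.mem_nhds hzW.1)
    have hfx : DifferentiableAt ℝ (pdx f₁) z :=
      (hpdx_f.differentiableOn one_ne_zero).differentiableAt (hV₁.mem_nhds hzW.2)
    have hfy : DifferentiableAt ℝ (pdy f₁) z :=
      (hpdy_f.differentiableOn one_ne_zero).differentiableAt (hV₁.mem_nhds hzW.2)
    simp only [hFAdef, hFBdef]
    exact (pointwise_div σ₁ X₁ p₁ f₁ z hp hf hXd hpx hpy hfx hfy).symm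
  rw [MeasureTheory.setIntegral_congr_fun hmeasOmega hdiv_eq]
  rw [omega_union ε hε0]
  rw [MeasureTheory.setIntegral_union (tri_disjoint ε hε0) (tri2_measurable ε)
    (hIntT1 _ hcont_div) (hIntT2 _ hcont_div)]
  -- split each triangle integral and apply the slice lemmas
  have hT1split : ∫ z in Tri1 ε, (pdx FA z + pdy FB z)
      = (∫ z in Tri1 ε, pdx FA z) + ∫ z in Tri1 ε, pdy FB z :=
    MeasureTheory.integral_add
      (hIntT1 _ ((hFA.continuousOn_fderiv_of_isOpen hW le_rfl).clm_apply continuousOn_const))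
      (hIntT1 _ ((hFB.continuousOn_fderiv_of_isOpen hW le_rfl).clm_apply continuousOn_const))
  have hT2split : ∫ z in Tri2 ε, (pdx FA z + pdy FB z)
      = (∫ z in Tri2 ε, pdx FA z) + ∫ z in Tri2 ε, pdy FB z :=
    MeasureTheory.integral_add
      (hIntT2 _ ((hFA.continuousOn_fderiv_of_isOpen hW le_rfl).clm_apply continuousOn_const))
      (hIntT2 _ ((hFB.continuousOn_fderiv_of_isOpen hW le_rfl).clm_apply continuousOn_const))
  have hT1x : ∫ z in Tri1 ε, pdx FA z
      = ∫ y in (0:ℝ)..(1 - ε), (FA (1, y) - FA (y + ε, y)) := by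
    apply slice_x FA W hW hFA (Ktri1 ε) (ktri1_compact ε hε0) hK1W 0 (1 - ε)
      (by linarith) (fun y => y + ε) (fun _ => 1)
    · intro y hy
      show y + ε ≤ 1
      linarith [hy.2]
    · intro y hy x hx
      simp only [Set.mem_Icc] at hx
      exact ⟨show ε ≤ x - y by linarith [hx.1], hx.2, hy.1⟩
    · exact tri1_measurable ε
    · intro x y
      simp only [Tri1, Set.mem_setOf_eq, Set.mem_Ioo]
      constructor
      · rintro ⟨h1, h2, h3⟩; exact ⟨⟨h3, by linarith⟩, by linarith, h2⟩
      · rintro ⟨⟨h1, h2⟩, h3, h4⟩; exact ⟨by linarith, h4, h1⟩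
  have hT1y : ∫ z in Tri1 ε, pdy FB z
      = ∫ x in ε..1, (FB (x, x - ε) - FB (x, 0)) := by
    apply slice_y FB W hW hFB (Ktri1 ε) (ktri1_compact ε hε0) hK1W ε 1
      (by linarith) (fun _ => 0) (fun x => x - ε)
    · intro x hx
      show (0:ℝ) ≤ x - ε
      linarith [hx.1]
    · intro x hx y hy
      simp only [Set.mem_Icc] at hy
      exact ⟨show ε ≤ x - y by linarith [hy.2], hx.2, hy.1⟩
    · exact tri1_measurable ε
    · intro x y
      simp only [Tri1, Set.mem_setOf_eq, Set.mem_Ioo]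
      constructor
      · rintro ⟨h1, h2, h3⟩; exact ⟨⟨by linarith, h2⟩, h3, by linarith⟩
      · rintro ⟨⟨h1, h2⟩, h3, h4⟩; exact ⟨by linarith, h2, h3⟩
  have hT2x : ∫ z in Tri2 ε, pdx FA z
      = ∫ y in ε..1, (FA (y - ε, y) - FA (0, y)) := by
    apply slice_x FA W hW hFA (Ktri2 ε) (ktri2_compact ε hε0) hK2W ε 1
      (by linarith) (fun _ => 0) (fun y => y - ε)
    · intro y hy
      show (0:ℝ) ≤ y - ε
      linarith [hy.1]
    · intro y hy x hx
      simp only [Set.mem_Icc] at hx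
      exact ⟨show ε ≤ y - x by linarith [hx.2], hy.2, hx.1⟩
    · exact tri2_measurable ε
    · intro x y
      simp only [Tri2, Set.mem_setOf_eq, Set.mem_Ioo]
      constructor
      · rintro ⟨h1, h2, h3⟩; exact ⟨⟨by linarith, h2⟩, h3, by linarith⟩
      · rintro ⟨⟨h1, h2⟩, h3, h4⟩; exact ⟨by linarith, h2, h3⟩
  have hT2y : ∫ z in Tri2 ε, pdy FB z
      = ∫ x in (0:ℝ)..(1 - ε), (FB (x, 1) - FB (x, x + ε)) := by
    apply slice_y FB W hW hFB (Ktri2 ε) (ktri2_compact ε hε0) hK2W 0 (1 - ε)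
      (by linarith) (fun x => x + ε) (fun _ => 1)
    · intro x hx
      show x + ε ≤ 1
      linarith [hx.2]
    · intro x hx y hy
      simp only [Set.mem_Icc] at hy
      exact ⟨show ε ≤ y - x by linarith [hy.1], hy.2, hx.1⟩
    · exact tri2_measurable ε
    · intro x y
      simp only [Tri2, Set.mem_setOf_eq, Set.mem_Ioo]
      constructor
      · rintro ⟨h1, h2, h3⟩; exact ⟨⟨h3, by linarith⟩, by linarith, h2⟩
      · rintro ⟨⟨h1, h2⟩, h3, h4⟩; exact ⟨by linarith, h4, h1⟩
  rw [hT1split, hT2split, hT1x, hT1y, hT2x, hT2y]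
  -- boundary simplification on each guard/reflecting edge
  have hguard1 : ∀ y : ℝ, 0 ≤ y → y ≤ 1 - ε → (y + ε, y) ∈ GuardEps ε := by
    intro y h0 h1
    refine ⟨⟨show (0:ℝ) ≤ y + ε by linarith, show y + ε ≤ 1 by linarith⟩,
      ⟨h0, by show y ≤ 1; linarith⟩, ?_⟩
    show |y + ε - y| = ε
    rw [show y + ε - y = ε by ring, abs_of_pos hε0]
  have hguard2 : ∀ y : ℝ, ε ≤ y → y ≤ 1 → (y - ε, y) ∈ GuardEps ε := by
    intro y h0 h1
    refine ⟨⟨show (0:ℝ) ≤ y - ε by linarith, show y - ε ≤ 1 by linarith⟩,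
      ⟨show (0:ℝ) ≤ y by linarith, h1⟩, ?_⟩
    show |y - ε - y| = ε
    rw [show y - ε - y = -ε by ring, abs_neg, abs_of_pos hε0]
  have e1 : ∫ y in (0:ℝ)..(1 - ε), (FA (1, y) - FA (y + ε, y))
      = ∫ xC in (ε / 2)..(1 - ε / 2),
          (-(f₂ xC * YA σ₁ X₁ p₁ (xC + ε / 2, xC - ε / 2))) := by
    rw [intervalIntegral.integral_congr
      (g := fun y => (fun xC => -(f₂ xC * YA σ₁ X₁ p₁ (xC + ε / 2, xC - ε / 2))) (y + ε / 2))
      ?_, intervalIntegral.integral_comp_add_right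
        (fun xC => -(f₂ xC * YA σ₁ X₁ p₁ (xC + ε / 2, xC - ε / 2))) (ε / 2),
      show (0:ℝ) + ε / 2 = ε / 2 by ring, show 1 - ε + ε / 2 = 1 - ε / 2 by ring]
    intro y hy
    rw [Set.uIcc_of_le (by linarith : (0:ℝ) ≤ 1 - ε)] at hy
    obtain ⟨hy0, hy1⟩ := hy
    have hyI : y ∈ Set.Icc (0:ℝ) 1 := ⟨hy0, by linarith⟩
    have hg := hguard1 y hy0 hy1
    simp only [hFAdef]
    rw [(hrefl_A y hyI).2, (hNeu_A y hyI).2, hp₁guard _ hg, hcomp₁ _ hg]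
    show f₁ (1, y) * 0 + σ₁ ^ 2 / 2 * (p₁ (1, y) * 0)
        - (f₂ ((y + ε + y) / 2) * YA σ₁ X₁ p₁ (y + ε, y) + σ₁ ^ 2 / 2 * (0 * pdx f₁ (y + ε, y)))
      = -(f₂ (y + ε / 2) * YA σ₁ X₁ p₁ (y + ε / 2 + ε / 2, y + ε / 2 - ε / 2))
    rw [show (y + ε + y) / 2 = y + ε / 2 by ring, show y + ε / 2 + ε / 2 = y + ε by ring,
      show y + ε / 2 - ε / 2 = y by ring]
    ring
  have e2 : ∫ x in ε..1, (FB (x, x - ε) - FB (x, 0))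
      = ∫ xC in (ε / 2)..(1 - ε / 2),
          (f₂ xC * YB σ₁ X₁ p₁ (xC + ε / 2, xC - ε / 2)) := by
    rw [intervalIntegral.integral_congr
      (g := fun x => (fun xC => f₂ xC * YB σ₁ X₁ p₁ (xC + ε / 2, xC - ε / 2)) (x - ε / 2))
      ?_, intervalIntegral.integral_comp_sub_right
        (fun xC => f₂ xC * YB σ₁ X₁ p₁ (xC + ε / 2, xC - ε / 2)) (ε / 2),
      show ε - ε / 2 = ε / 2 by ring]
    intro x hx
    rw [Set.uIcc_of_le (by linarith : ε ≤ 1)] at hx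
    obtain ⟨hx0, hx1⟩ := hx
    have hxI : x ∈ Set.Icc (0:ℝ) 1 := ⟨by linarith, hx1⟩
    have hg : (x, x - ε) ∈ GuardEps ε := by
      refine ⟨⟨show (0:ℝ) ≤ x by linarith, hx1⟩,
        ⟨show (0:ℝ) ≤ x - ε by linarith, show x - ε ≤ 1 by linarith⟩, ?_⟩
      show |x - (x - ε)| = ε
      rw [show x - (x - ε) = ε by ring, abs_of_pos hε0]
    simp only [hFBdef]
    rw [(hrefl_B x hxI).1, (hNeu_B x hxI).1, hp₁guard _ hg, hcomp₁ _ hg]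
    show f₂ ((x + (x - ε)) / 2) * YB σ₁ X₁ p₁ (x, x - ε) + σ₁ ^ 2 / 2 * (0 * pdy f₁ (x, x - ε))
        - (f₁ (x, 0) * 0 + σ₁ ^ 2 / 2 * (p₁ (x, 0) * 0))
      = f₂ (x - ε / 2) * YB σ₁ X₁ p₁ (x - ε / 2 + ε / 2, x - ε / 2 - ε / 2)
    rw [show (x + (x - ε)) / 2 = x - ε / 2 by ring, show x - ε / 2 + ε / 2 = x by ring,
      show x - ε / 2 - ε / 2 = x - ε by ring]
    ring
  have e3 : ∫ y in ε..1, (FA (y - ε, y) - FA (0, y))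
      = ∫ xC in (ε / 2)..(1 - ε / 2),
          (f₂ xC * YA σ₁ X₁ p₁ (xC - ε / 2, xC + ε / 2)) := by
    rw [intervalIntegral.integral_congr
      (g := fun y => (fun xC => f₂ xC * YA σ₁ X₁ p₁ (xC - ε / 2, xC + ε / 2)) (y - ε / 2))
      ?_, intervalIntegral.integral_comp_sub_right
        (fun xC => f₂ xC * YA σ₁ X₁ p₁ (xC - ε / 2, xC + ε / 2)) (ε / 2),
      show ε - ε / 2 = ε / 2 by ring]
    intro y hy
    rw [Set.uIcc_of_le (by linarith : ε ≤ 1)] at hy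
    obtain ⟨hy0, hy1⟩ := hy
    have hyI : y ∈ Set.Icc (0:ℝ) 1 := ⟨by linarith, hy1⟩
    have hg := hguard2 y hy0 hy1
    simp only [hFAdef]
    rw [(hrefl_A y hyI).1, (hNeu_A y hyI).1, hp₁guard _ hg, hcomp₁ _ hg]
    show f₂ ((y - ε + y) / 2) * YA σ₁ X₁ p₁ (y - ε, y) + σ₁ ^ 2 / 2 * (0 * pdx f₁ (y - ε, y))
        - (f₁ (0, y) * 0 + σ₁ ^ 2 / 2 * (p₁ (0, y) * 0))
      = f₂ (y - ε / 2) * YA σ₁ X₁ p₁ (y - ε / 2 - ε / 2, y - ε / 2 + ε / 2)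
    rw [show (y - ε + y) / 2 = y - ε / 2 by ring, show y - ε / 2 - ε / 2 = y - ε by ring,
      show y - ε / 2 + ε / 2 = y by ring]
    ring
  have e4 : ∫ x in (0:ℝ)..(1 - ε), (FB (x, 1) - FB (x, x + ε))
      = ∫ xC in (ε / 2)..(1 - ε / 2),
          (-(f₂ xC * YB σ₁ X₁ p₁ (xC - ε / 2, xC + ε / 2))) := by
    rw [intervalIntegral.integral_congr
      (g := fun x => (fun xC => -(f₂ xC * YB σ₁ X₁ p₁ (xC - ε / 2, xC + ε / 2))) (x + ε / 2))
      ?_, intervalIntegral.integral_comp_add_right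
        (fun xC => -(f₂ xC * YB σ₁ X₁ p₁ (xC - ε / 2, xC + ε / 2))) (ε / 2),
      show (0:ℝ) + ε / 2 = ε / 2 by ring, show 1 - ε + ε / 2 = 1 - ε / 2 by ring]
    intro x hx
    rw [Set.uIcc_of_le (by linarith : (0:ℝ) ≤ 1 - ε)] at hx
    obtain ⟨hx0, hx1⟩ := hx
    have hxI : x ∈ Set.Icc (0:ℝ) 1 := ⟨hx0, by linarith⟩
    have hg : (x, x + ε) ∈ GuardEps ε := by
      refine ⟨⟨hx0, show x ≤ 1 by linarith⟩,
        ⟨show (0:ℝ) ≤ x + ε by linarith, show x + ε ≤ 1 by linarith⟩, ?_⟩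
      show |x - (x + ε)| = ε
      rw [show x - (x + ε) = -ε by ring, abs_neg, abs_of_pos hε0]
    simp only [hFBdef]
    rw [(hrefl_B x hxI).2, (hNeu_B x hxI).2, hp₁guard _ hg, hcomp₁ _ hg]
    show f₁ (x, 1) * 0 + σ₁ ^ 2 / 2 * (p₁ (x, 1) * 0)
        - (f₂ ((x + (x + ε)) / 2) * YB σ₁ X₁ p₁ (x, x + ε) + σ₁ ^ 2 / 2 * (0 * pdy f₁ (x, x + ε)))
      = -(f₂ (x + ε / 2) * YB σ₁ X₁ p₁ (x + ε / 2 - ε / 2, x + ε / 2 + ε / 2))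
    rw [show (x + (x + ε)) / 2 = x + ε / 2 by ring, show x + ε / 2 - ε / 2 = x by ring,
      show x + ε / 2 + ε / 2 = x + ε by ring]
    ring
  rw [e1, e2, e3, e4]
  -- recombine into the single source integral
  have hmid : ε / 2 ≤ 1 - ε / 2 := by linarith
  have hf₂cont : ContinuousOn f₂ (Set.Icc (ε / 2) (1 - ε / 2)) := by
    have hmap1 : ∀ xC ∈ Set.Icc (ε / 2) (1 - ε / 2), (xC + ε / 2, xC - ε / 2) ∈ W := by
      intro xC hxc
      exact hK1W ⟨by show ε ≤ xC + ε / 2 - (xC - ε / 2); linarith,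
        by show xC + ε / 2 ≤ 1; linarith [hxc.2], by show (0:ℝ) ≤ xC - ε / 2; linarith [hxc.1]⟩
    have hcomp : ContinuousOn (fun xC => f₁ (xC + ε / 2, xC - ε / 2))
        (Set.Icc (ε / 2) (1 - ε / 2)) := by
      apply (hf₁W.continuousOn).comp
        (((continuous_id.add continuous_const).prodMk (continuous_id.sub continuous_const)).continuousOn) hmap1
    apply ContinuousOn.congr hcomp
    intro xC hxc
    have hg : ((xC + ε / 2 : ℝ), (xC - ε / 2 : ℝ)) ∈ GuardEps ε := by
      refine ⟨⟨show (0:ℝ) ≤ xC + ε / 2 by linarith [hxc.1],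
        show xC + ε / 2 ≤ 1 by linarith [hxc.2]⟩,
        ⟨show (0:ℝ) ≤ xC - ε / 2 by linarith [hxc.1],
          show xC - ε / 2 ≤ 1 by linarith [hxc.2]⟩, ?_⟩
      show |xC + ε / 2 - (xC - ε / 2)| = ε
      rw [show xC + ε / 2 - (xC - ε / 2) = ε by ring, abs_of_pos hε0]
    have := hcomp₁ _ hg
    simp only at this
    rw [show (xC + ε / 2 + (xC - ε / 2)) / 2 = xC by ring] at this
    exact this.symm
  have hmapK1 : ∀ xC ∈ Set.Icc (ε / 2) (1 - ε / 2), (xC + ε / 2, xC - ε / 2) ∈ W := by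
    intro xC hxc
    exact hK1W ⟨by show ε ≤ xC + ε / 2 - (xC - ε / 2); linarith,
      by show xC + ε / 2 ≤ 1; linarith [hxc.2], by show (0:ℝ) ≤ xC - ε / 2; linarith [hxc.1]⟩
  have hmapK2 : ∀ xC ∈ Set.Icc (ε / 2) (1 - ε / 2), (xC - ε / 2, xC + ε / 2) ∈ W := by
    intro xC hxc
    exact hK2W ⟨by show ε ≤ xC + ε / 2 - (xC - ε / 2); linarith,
      by show xC + ε / 2 ≤ 1; linarith [hxc.2], by show (0:ℝ) ≤ xC - ε / 2; linarith [hxc.1]⟩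
  have hYAp : ContinuousOn (fun xC => YA σ₁ X₁ p₁ (xC + ε / 2, xC - ε / 2))
      (Set.Icc (ε / 2) (1 - ε / 2)) :=
    (hYA.continuousOn).comp (((continuous_id.add continuous_const).prodMk (continuous_id.sub continuous_const)).continuousOn) hmapK1
  have hYBp : ContinuousOn (fun xC => YB σ₁ X₁ p₁ (xC + ε / 2, xC - ε / 2))
      (Set.Icc (ε / 2) (1 - ε / 2)) :=
    (hYB.continuousOn).comp (((continuous_id.add continuous_const).prodMk (continuous_id.sub continuous_const)).continuousOn) hmapK1
  have hYAm : ContinuousOn (fun xC => YA σ₁ X₁ p₁ (xC - ε / 2, xC + ε / 2))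
      (Set.Icc (ε / 2) (1 - ε / 2)) :=
    (hYA.continuousOn).comp (((continuous_id.sub continuous_const).prodMk (continuous_id.add continuous_const)).continuousOn) hmapK2
  have hYBm : ContinuousOn (fun xC => YB σ₁ X₁ p₁ (xC - ε / 2, xC + ε / 2))
      (Set.Icc (ε / 2) (1 - ε / 2)) :=
    (hYB.continuousOn).comp (((continuous_id.sub continuous_const).prodMk (continuous_id.add continuous_const)).continuousOn) hmapK2
  have hi1 : IntervalIntegrable
      (fun xC => -(f₂ xC * YA σ₁ X₁ p₁ (xC + ε / 2, xC - ε / 2))) volume (ε / 2) (1 - ε / 2) := by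
    apply ContinuousOn.intervalIntegrable
    rw [Set.uIcc_of_le hmid]
    exact (hf₂cont.mul hYAp).neg
  have hi2 : IntervalIntegrable
      (fun xC => f₂ xC * YB σ₁ X₁ p₁ (xC + ε / 2, xC - ε / 2)) volume (ε / 2) (1 - ε / 2) := by
    apply ContinuousOn.intervalIntegrable
    rw [Set.uIcc_of_le hmid]
    exact hf₂cont.mul hYBp
  have hi3 : IntervalIntegrable
      (fun xC => f₂ xC * YA σ₁ X₁ p₁ (xC - ε / 2, xC + ε / 2)) volume (ε / 2) (1 - ε / 2) := by
    apply ContinuousOn.intervalIntegrable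
    rw [Set.uIcc_of_le hmid]
    exact hf₂cont.mul hYAm
  have hi4 : IntervalIntegrable
      (fun xC => -(f₂ xC * YB σ₁ X₁ p₁ (xC - ε / 2, xC + ε / 2))) volume (ε / 2) (1 - ε / 2) := by
    apply ContinuousOn.intervalIntegrable
    rw [Set.uIcc_of_le hmid]
    exact (hf₂cont.mul hYBm).neg
  have hfinal : ∫ xC in (ε / 2)..(1 - ε / 2), f₂ xC * s2 ε σ₁ X₁ p₁ xC
      = ((∫ xC in (ε / 2)..(1 - ε / 2),
            (-(f₂ xC * YA σ₁ X₁ p₁ (xC + ε / 2, xC - ε / 2))))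
          + ∫ xC in (ε / 2)..(1 - ε / 2),
              f₂ xC * YB σ₁ X₁ p₁ (xC + ε / 2, xC - ε / 2))
        + ((∫ xC in (ε / 2)..(1 - ε / 2),
            f₂ xC * YA σ₁ X₁ p₁ (xC - ε / 2, xC + ε / 2))
          + ∫ xC in (ε / 2)..(1 - ε / 2),
              (-(f₂ xC * YB σ₁ X₁ p₁ (xC - ε / 2, xC + ε / 2)))) := by
    rw [← intervalIntegral.integral_add hi1 hi2, ← intervalIntegral.integral_add hi3 hi4,
      ← intervalIntegral.integral_add (hi1.add hi2) (hi3.add hi4)]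
    apply intervalIntegral.integral_congr
    intro xC _
    show f₂ xC * s2 ε σ₁ X₁ p₁ xC = _
    rw [s2]
    ring
  rw [hfinal]
end HybridAux

/-- The coupled weak-form identity underlying the hybrid Fokker–Planck equation for
the two-mode coalescing–splitting system: for every pair of test functions `(f₁, f₂)`
satisfying the Koopman compatibility conditions across the resets and the Neumann
conditions on the reflecting boundaries,
`⟨p₁, 𝒜₁f₁⟩ + ⟨p₂, 𝒜₂f₂⟩ = −⟨f₁, ∇·Y₁⟩ − ⟨f₂, Y₂′⟩ + ⟨f₂, s₂⟩ + f₁(x*) Y₂(1)`. -/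
theorem hybrid_weak_form_identity
    (ε : ℝ) (hε : ε ∈ Set.Ioo (0 : ℝ) 1)
    (σ₁ σ₂ : ℝ) (hσ₁ : 0 < σ₁) (hσ₂ : 0 < σ₂)
    (X₁ : ℝ × ℝ → ℝ × ℝ) (hX₁ : ContDiff ℝ 1 X₁)
    (X₂ : ℝ → ℝ) (hX₂ : ContDiff ℝ 1 X₂)
    (xstar : ℝ × ℝ) (hxstar : xstar ∈ OmegaEps ε)
    (p₁ : ℝ × ℝ → ℝ) (U₁ : Set (ℝ × ℝ)) (hU₁ : IsOpen U₁)
    (hclU₁ : closure (OmegaEps ε) ⊆ U₁) (hp₁ : ContDiffOn ℝ 2 p₁ U₁)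
    (p₂ : ℝ → ℝ) (U₂ : Set ℝ) (hU₂ : IsOpen U₂)
    (hIU₂ : Set.Icc (0 : ℝ) 1 ⊆ U₂) (hp₂ : ContDiffOn ℝ 2 p₂ U₂)
    -- vanishing trace of p₁ on the guard
    (hp₁guard : ∀ z ∈ GuardEps ε, p₁ z = 0)
    -- vanishing normal current on the reflecting outer boundary of mode 1
    (hrefl_A : ∀ y ∈ Set.Icc (0 : ℝ) 1,
      YA σ₁ X₁ p₁ (0, y) = 0 ∧ YA σ₁ X₁ p₁ (1, y) = 0)
    (hrefl_B : ∀ x ∈ Set.Icc (0 : ℝ) 1,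
      YB σ₁ X₁ p₁ (x, 0) = 0 ∧ YB σ₁ X₁ p₁ (x, 1) = 0)
    -- vanishing trace of p₂ at the mode-2 guard and reflecting condition at 0
    (hp₂guard : p₂ 1 = 0)
    (hY₂refl : Y2cur σ₂ X₂ p₂ 0 = 0)
    -- test functions
    (f₁ : ℝ × ℝ → ℝ) (V₁ : Set (ℝ × ℝ)) (hV₁ : IsOpen V₁)
    (hclV₁ : closure (OmegaEps ε) ⊆ V₁) (hf₁ : ContDiffOn ℝ 2 f₁ V₁)
    (f₂ : ℝ → ℝ) (V₂ : Set ℝ) (hV₂ : IsOpen V₂)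
    (hIV₂ : Set.Icc (0 : ℝ) 1 ⊆ V₂) (hf₂ : ContDiffOn ℝ 2 f₂ V₂)
    -- Koopman compatibility conditions across the resets
    (hcomp₁ : ∀ z ∈ GuardEps ε, f₁ z = f₂ ((z.1 + z.2) / 2))
    (hcomp₂ : f₂ 1 = f₁ xstar)
    -- Neumann conditions on reflecting boundaries
    (hNeu_A : ∀ y ∈ Set.Icc (0 : ℝ) 1, pdx f₁ (0, y) = 0 ∧ pdx f₁ (1, y) = 0)
    (hNeu_B : ∀ x ∈ Set.Icc (0 : ℝ) 1, pdy f₁ (x, 0) = 0 ∧ pdy f₁ (x, 1) = 0)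
    (hNeu₂ : deriv f₂ 0 = 0) :
    (∫ z in OmegaEps ε,
        p₁ z * ((X₁ z).1 * pdx f₁ z + (X₁ z).2 * pdy f₁ z + σ₁ ^ 2 / 2 * lap f₁ z))
      + (∫ x in (0:ℝ)..1, p₂ x * (X₂ x * deriv f₂ x + σ₂ ^ 2 / 2 * deriv (deriv f₂) x))
      = -(∫ z in OmegaEps ε,
            f₁ z * (pdx (YA σ₁ X₁ p₁) z + pdy (YB σ₁ X₁ p₁) z))
        - (∫ x in (0:ℝ)..1, f₂ x * deriv (Y2cur σ₂ X₂ p₂) x)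
        + (∫ xC in (ε / 2)..(1 - ε / 2), f₂ xC * s2 ε σ₁ X₁ p₁ xC)
        + f₁ xstar * Y2cur σ₂ X₂ p₂ 1 := by
  obtain ⟨hε0, hε1⟩ := hε
  have h2D := twoD ε σ₁ hε0 hε1 X₁ hX₁ p₁ U₁ hU₁ hclU₁ hp₁ f₁ V₁ hV₁ hclV₁ hf₁
    hp₁guard hrefl_A hrefl_B f₂ hcomp₁ hNeu_A hNeu_B
  have h1D := oneD σ₂ X₂ hX₂ p₂ U₂ hU₂ hIU₂ hp₂ f₂ V₂ hV₂ hIV₂ hf₂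
  have hG1 : f₂ 1 * Y2cur σ₂ X₂ p₂ 1 + σ₂ ^ 2 / 2 * (p₂ 1 * deriv f₂ 1)
      = f₁ xstar * Y2cur σ₂ X₂ p₂ 1 := by
    rw [hcomp₂, hp₂guard]; ring
  have hG0 : f₂ 0 * Y2cur σ₂ X₂ p₂ 0 + σ₂ ^ 2 / 2 * (p₂ 0 * deriv f₂ 0) = 0 := by
    rw [hY₂refl, hNeu₂]; ring
  rw [hG1, hG0, sub_zero] at h1D
  linarith [h2D, h1D]
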